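/- Fix t > 0, σ₀ > 0, x, ζ ∈ ℝ and real coefficients a₂, a₃. With u^BS the Black-Scholes price, y₀ = (x - ζ - σ₀²t/2)/(σ₀√(2t)), and u₁^(3) := (a₂(∂²_x - ∂_x) + a₃(∂³_x - ∂_x)) u^BS, we have u₁^(3)/∂_σ u^BS = (1/(tσ₀)) [a₃ (-1/(σ₀√(2t))) H₁(y₀) + (a₂ + a₃)], where H₁(y) = 2y. -/

import Mathlib

open MeasureTheory

/-- Standard normal cumulative distribution function. -/
noncomputable def stdNormalCDF (y : ℝ) : ℝ :=
  ∫ s in Set.Iic y, Real.exp (-s ^ 2 / 2) / Real.sqrt (2 * Real.pi)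

/-- Black-Scholes call price `u^BS(t,x,σ)` with log-strike `ζ`. -/
noncomputable def uBS (ζ t x σ : ℝ) : ℝ :=
  Real.exp x * stdNormalCDF ((x - ζ + σ ^ 2 * t / 2) / (σ * Real.sqrt t)) -
    Real.exp ζ * stdNormalCDF ((x - ζ - σ ^ 2 * t / 2) / (σ * Real.sqrt t))

/-- The `n`-th (physicists') Hermite polynomial via the Rodrigues formula. -/
noncomputable def hermiteH (n : ℕ) (y : ℝ) : ℝ :=
  (-1) ^ n * Real.exp (y ^ 2) * iteratedDeriv n (fun s => Real.exp (-s ^ 2)) y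

/-!
With `φ` the standard normal density and `d₊ = bsDPlus`, `d₋ = bsDMinus`, the identity
`d₊² - d₋² = 2 (x - ζ)` gives `eˣ φ(d₊) = e^ζ φ(d₋)`. This cancels every term coming from
differentiating `d±` inside `N`, so `∂ₓu = eˣ N(d₊)` and, since `∂_σ (d₊ - d₋) = √t`,
`∂_σ u = √t eˣ φ(d₊)`. Differentiating `∂ₓu` twice more, with `∂ₓ d₊ = c := 1 / (σ√t)` and
`φ'(y) = -y φ(y)`, gives `(∂ₓ² - ∂ₓ) u = c eˣ φ(d₊)` and `(∂ₓ³ - ∂ₓ) u = c (2 - c d₊) eˣ φ(d₊)`.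
After dividing by `∂_σ u` only an affine function of `d₊`, hence of `H₁(y₀) = 2 y₀`, is left.
-/

noncomputable def stdNormalPDF (y : ℝ) : ℝ := Real.exp (-y ^ 2 / 2) / Real.sqrt (2 * Real.pi)

lemma integrable_stdNormalPDF : Integrable stdNormalPDF := by
  have h := (integrable_exp_neg_mul_sq (show (0 : ℝ) < 1 / 2 by norm_num)).div_const
    (Real.sqrt (2 * Real.pi))
  convert h using 2 with s
  unfold stdNormalPDF
  ring_nf

lemma continuous_stdNormalPDF : Continuous stdNormalPDF := by
  unfold stdNormalPDF
  fun_prop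

lemma stdNormalPDF_pos (y : ℝ) : 0 < stdNormalPDF y := by
  unfold stdNormalPDF
  positivity

lemma hasDerivAt_stdNormalCDF (y : ℝ) : HasDerivAt stdNormalCDF (stdNormalPDF y) y := by
  have hsplit : stdNormalCDF = fun z => stdNormalCDF 0 + ∫ s in (0 : ℝ)..z, stdNormalPDF s := by
    funext z
    have := intervalIntegral.integral_Iic_sub_Iic (μ := volume) (a := 0) (b := z)
      integrable_stdNormalPDF.integrableOn integrable_stdNormalPDF.integrableOn
    unfold stdNormalCDF stdNormalPDF at *
    linarith
  rw [hsplit]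
  exact (intervalIntegral.integral_hasDerivAt_right integrable_stdNormalPDF.intervalIntegrable
    continuous_stdNormalPDF.stronglyMeasurable.stronglyMeasurableAtFilter
    continuous_stdNormalPDF.continuousAt).const_add _

lemma hasDerivAt_stdNormalPDF (y : ℝ) : HasDerivAt stdNormalPDF (-y * stdNormalPDF y) y := by
  have hexp : HasDerivAt (fun s : ℝ => -s ^ 2 / 2) (-y) y :=
    ((hasDerivAt_pow 2 y).neg.div_const 2).congr_deriv (by push_cast; ring)
  refine (((Real.hasDerivAt_exp _).comp y hexp).div_const (Real.sqrt (2 * Real.pi))).congr_deriv ?_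
  unfold stdNormalPDF
  ring

lemma hermiteH_one (y : ℝ) : hermiteH 1 y = 2 * y := by
  have hgauss : HasDerivAt (fun s : ℝ => Real.exp (-s ^ 2)) (Real.exp (-y ^ 2) * (-(2 * y))) y :=
    (Real.hasDerivAt_exp _).comp y ((hasDerivAt_pow 2 y).neg.congr_deriv (by push_cast; ring))
  have hinv : Real.exp (y ^ 2) * Real.exp (-y ^ 2) = 1 := by
    rw [← Real.exp_add]; simp
  unfold hermiteH
  rw [iteratedDeriv_one, hgauss.deriv]
  linear_combination (2 * y) * hinv

noncomputable def bsDPlus (ζ t x σ : ℝ) : ℝ := (x - ζ + σ ^ 2 * t / 2) / (σ * Real.sqrt t)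

noncomputable def bsDMinus (ζ t x σ : ℝ) : ℝ := (x - ζ - σ ^ 2 * t / 2) / (σ * Real.sqrt t)

section BlackScholes

variable {ζ t σ : ℝ}

lemma sq_mul_sqrt (ht : 0 ≤ t) : (σ * Real.sqrt t) ^ 2 = σ ^ 2 * t := by
  rw [mul_pow, Real.sq_sqrt ht]

lemma exp_mul_stdNormalPDF_bsDPlus (ht : 0 < t) (hσ : σ ≠ 0) (x : ℝ) :
    Real.exp x * stdNormalPDF (bsDPlus ζ t x σ) = Real.exp ζ * stdNormalPDF (bsDMinus ζ t x σ) := by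
  have hsq : bsDPlus ζ t x σ ^ 2 = bsDMinus ζ t x σ ^ 2 + 2 * (x - ζ) := by
    have hne : σ * Real.sqrt t ≠ 0 := mul_ne_zero hσ (Real.sqrt_pos.mpr ht).ne'
    unfold bsDPlus bsDMinus
    rw [div_pow, div_pow, sq_mul_sqrt ht.le]
    field_simp
    ring
  unfold stdNormalPDF
  rw [mul_div_assoc', mul_div_assoc', ← Real.exp_add, ← Real.exp_add, hsq]
  ring_nf

lemma hasDerivAt_bsDPlus_x (x : ℝ) :
    HasDerivAt (fun x => bsDPlus ζ t x σ) (1 / (σ * Real.sqrt t)) x :=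
  (((hasDerivAt_id x).sub_const ζ).add_const _).div_const (σ * Real.sqrt t)

lemma hasDerivAt_bsDMinus_x (x : ℝ) :
    HasDerivAt (fun x => bsDMinus ζ t x σ) (1 / (σ * Real.sqrt t)) x :=
  (((hasDerivAt_id x).sub_const ζ).sub_const _).div_const (σ * Real.sqrt t)

lemma hasDerivAt_exp_mul_stdNormalCDF_bsDPlus (x : ℝ) :
    HasDerivAt (fun x => Real.exp x * stdNormalCDF (bsDPlus ζ t x σ))
      (Real.exp x * stdNormalCDF (bsDPlus ζ t x σ) +
        1 / (σ * Real.sqrt t) * (Real.exp x * stdNormalPDF (bsDPlus ζ t x σ))) x :=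
  ((Real.hasDerivAt_exp x).mul
    ((hasDerivAt_stdNormalCDF _).comp x (hasDerivAt_bsDPlus_x x))).congr_deriv
    (by simp only [Function.comp_apply]; ring)

lemma hasDerivAt_exp_mul_stdNormalPDF_bsDPlus (x : ℝ) :
    HasDerivAt (fun x => Real.exp x * stdNormalPDF (bsDPlus ζ t x σ))
      ((1 - 1 / (σ * Real.sqrt t) * bsDPlus ζ t x σ) *
        (Real.exp x * stdNormalPDF (bsDPlus ζ t x σ))) x :=
  ((Real.hasDerivAt_exp x).mul
    ((hasDerivAt_stdNormalPDF _).comp x (hasDerivAt_bsDPlus_x x))).congr_deriv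
    (by simp only [Function.comp_apply]; ring)

lemma hasDerivAt_uBS_x (ht : 0 < t) (hσ : σ ≠ 0) (x : ℝ) :
    HasDerivAt (fun x => uBS ζ t x σ) (Real.exp x * stdNormalCDF (bsDPlus ζ t x σ)) x := by
  refine ((hasDerivAt_exp_mul_stdNormalCDF_bsDPlus x).sub
    (((hasDerivAt_stdNormalCDF _).comp x (hasDerivAt_bsDMinus_x x)).const_mul
      (Real.exp ζ))).congr_deriv ?_
  linear_combination (1 / (σ * Real.sqrt t)) * exp_mul_stdNormalPDF_bsDPlus (ζ := ζ) ht hσ x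

lemma deriv_uBS_x (ht : 0 < t) (hσ : σ ≠ 0) :
    deriv (fun x => uBS ζ t x σ) = fun x => Real.exp x * stdNormalCDF (bsDPlus ζ t x σ) :=
  funext fun x => (hasDerivAt_uBS_x ht hσ x).deriv

lemma iteratedDeriv_two_uBS_x (ht : 0 < t) (hσ : σ ≠ 0) :
    iteratedDeriv 2 (fun x => uBS ζ t x σ) = fun x =>
      Real.exp x * stdNormalCDF (bsDPlus ζ t x σ) +
        1 / (σ * Real.sqrt t) * (Real.exp x * stdNormalPDF (bsDPlus ζ t x σ)) := by
  rw [iteratedDeriv_succ, iteratedDeriv_one, deriv_uBS_x ht hσ]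
  exact funext fun x => (hasDerivAt_exp_mul_stdNormalCDF_bsDPlus x).deriv

lemma iteratedDeriv_two_sub_deriv_uBS_x (ht : 0 < t) (hσ : σ ≠ 0) (x : ℝ) :
    iteratedDeriv 2 (fun x => uBS ζ t x σ) x - deriv (fun x => uBS ζ t x σ) x =
      1 / (σ * Real.sqrt t) * (Real.exp x * stdNormalPDF (bsDPlus ζ t x σ)) := by
  rw [iteratedDeriv_two_uBS_x ht hσ, deriv_uBS_x ht hσ]
  ring

lemma iteratedDeriv_three_sub_deriv_uBS_x (ht : 0 < t) (hσ : σ ≠ 0) (x : ℝ) :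
    iteratedDeriv 3 (fun x => uBS ζ t x σ) x - deriv (fun x => uBS ζ t x σ) x =
      1 / (σ * Real.sqrt t) * (2 - 1 / (σ * Real.sqrt t) * bsDPlus ζ t x σ) *
        (Real.exp x * stdNormalPDF (bsDPlus ζ t x σ)) := by
  rw [iteratedDeriv_succ, iteratedDeriv_two_uBS_x ht hσ, deriv_uBS_x ht hσ,
    ((hasDerivAt_exp_mul_stdNormalCDF_bsDPlus x).fun_add
      ((hasDerivAt_exp_mul_stdNormalPDF_bsDPlus x).const_mul _)).deriv]
  ring

end BlackScholes

section Vega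

variable {ζ t x : ℝ}

lemma bsDMinus_eq_bsDPlus_sub (ht : 0 ≤ t) (σ : ℝ) :
    bsDMinus ζ t x σ = bsDPlus ζ t x σ - σ * Real.sqrt t := by
  unfold bsDMinus bsDPlus
  rcases eq_or_ne (σ * Real.sqrt t) 0 with h | h
  · simp [h]
  · field_simp
    rw [← sq_mul_sqrt ht]
    ring

lemma hasDerivAt_bsDPlus_σ (ht : 0 < t) {σ : ℝ} (hσ : σ ≠ 0) :
    HasDerivAt (fun σ => bsDPlus ζ t x σ)
      (Real.sqrt t / 2 - (x - ζ) / (σ ^ 2 * Real.sqrt t)) σ := by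
  have hnum : HasDerivAt (fun σ : ℝ => x - ζ + σ ^ 2 * t / 2) (σ * t) σ :=
    ((((hasDerivAt_pow 2 σ).mul_const t).div_const 2).const_add (x - ζ)).congr_deriv
      (by push_cast; ring)
  have hden : HasDerivAt (fun σ : ℝ => σ * Real.sqrt t) (Real.sqrt t) σ :=
    ((hasDerivAt_id σ).mul_const (Real.sqrt t)).congr_deriv (one_mul _)
  have hs : Real.sqrt t ≠ 0 := (Real.sqrt_pos.mpr ht).ne'
  refine (hnum.div hden (mul_ne_zero hσ hs)).congr_deriv ?_
  rw [sq_mul_sqrt ht.le]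
  field_simp
  rw [Real.sq_sqrt ht.le]
  ring

lemma hasDerivAt_bsDMinus_σ (ht : 0 < t) {σ : ℝ} (hσ : σ ≠ 0) :
    HasDerivAt (fun σ => bsDMinus ζ t x σ)
      (-(Real.sqrt t / 2) - (x - ζ) / (σ ^ 2 * Real.sqrt t)) σ := by
  simp only [bsDMinus_eq_bsDPlus_sub ht.le]
  exact ((hasDerivAt_bsDPlus_σ ht hσ).sub ((hasDerivAt_id σ).mul_const _)).congr_deriv
    (by ring)

lemma hasDerivAt_uBS_σ (ht : 0 < t) {σ : ℝ} (hσ : σ ≠ 0) :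
    HasDerivAt (fun σ => uBS ζ t x σ)
      (Real.sqrt t * (Real.exp x * stdNormalPDF (bsDPlus ζ t x σ))) σ := by
  refine ((((hasDerivAt_stdNormalCDF _).comp σ (hasDerivAt_bsDPlus_σ ht hσ)).const_mul
    (Real.exp x)).sub
    (((hasDerivAt_stdNormalCDF _).comp σ (hasDerivAt_bsDMinus_σ ht hσ)).const_mul
      (Real.exp ζ))).congr_deriv ?_
  linear_combination (-(Real.sqrt t / 2) - (x - ζ) / (σ ^ 2 * Real.sqrt t)) *
    exp_mul_stdNormalPDF_bsDPlus (ζ := ζ) ht hσ x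

end Vega

theorem u1_third_order_ratio (ζ t x σ₀ a₂ a₃ : ℝ) (ht : 0 < t) (hσ₀ : 0 < σ₀) :
    (a₂ * (iteratedDeriv 2 (fun x' => uBS ζ t x' σ₀) x - deriv (fun x' => uBS ζ t x' σ₀) x) +
      a₃ * (iteratedDeriv 3 (fun x' => uBS ζ t x' σ₀) x - deriv (fun x' => uBS ζ t x' σ₀) x)) /
        deriv (fun s => uBS ζ t x s) σ₀ =
      (1 / (t * σ₀)) *
        (a₃ * (-(1 / (σ₀ * Real.sqrt (2 * t)))) *
            hermiteH 1 ((x - ζ - σ₀ ^ 2 * t / 2) / (σ₀ * Real.sqrt (2 * t))) + (a₂ + a₃)) := by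
  have hσ : σ₀ ≠ 0 := hσ₀.ne'
  have hvega : 0 < Real.exp x * stdNormalPDF (bsDPlus ζ t x σ₀) :=
    mul_pos (Real.exp_pos x) (stdNormalPDF_pos _)
  rw [iteratedDeriv_two_sub_deriv_uBS_x ht hσ, iteratedDeriv_three_sub_deriv_uBS_x ht hσ,
    (hasDerivAt_uBS_σ ht hσ).deriv, hermiteH_one]
  generalize Real.exp x * stdNormalPDF (bsDPlus ζ t x σ₀) = v at hvega ⊢
  have hst : Real.sqrt t ^ 2 = t := Real.sq_sqrt ht.le
  have hs2t : Real.sqrt (2 * t) ^ 2 = 2 * t := Real.sq_sqrt (by positivity)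
  rw [bsDPlus]
  field_simp
  rw [hs2t, show Real.sqrt t ^ 4 = (Real.sqrt t ^ 2) ^ 2 by ring, hst]
  ring
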